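/- arXiv:1804.00642 — 4 statements merged into one kernel-verified Lean document; each statement's English description precedes it below -/
import Mathlib

section
/- Let K be a field, A an associative unital K-algebra, and M a finite-dimensional indecomposable A-module. Then dim_K(End_A(M)/J(End_A(M))) ≤ dim_K M, where J(End_A(M)) denotes the Jacobson radical of the endomorphism ring End_A(M). -/
/-!
By Fitting's lemma every endomorphism of an indecomposable module of finite length is invertible
or nilpotent, so the non-units of `E = End_A(M)` lie in its Jacobson radical `J`. Nakayama's lemma
gives `x ∉ J • M`, and then `f ↦ f x mod J • M` is a `K`-linear map `E → M ⧸ J • M` with kernel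
exactly `J`: a unit `f` with `f x ∈ J • M` would put `x` in `J • M`.
-/

universe u

/-- A module is indecomposable if it is nonzero and is not the direct sum of two nonzero
submodules. -/
def IsIndecomposableModule (A M : Type u) [Ring A] [AddCommGroup M] [Module A M] : Prop :=
  Nontrivial M ∧ ∀ W₁ W₂ : Submodule A M, IsCompl W₁ W₂ → W₁ = ⊥ ∨ W₂ = ⊥

instance endIsScalarTower (K A M : Type u) [Field K] [Ring A] [Algebra K A]
    [AddCommGroup M] [Module A M] [Module K M] [IsScalarTower K A M] [SMulCommClass A K M] :
    IsScalarTower K (Module.End A M) (Module.End A M) :=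
  ⟨fun _ _ _ => rfl⟩

section UnitOrNilpotent

variable {M₀ : Type*} [MonoidWithZero M₀]

theorem IsNilpotent.subsingleton_of_mul_eq_one {f g : M₀} (hf : IsNilpotent f)
    (hgf : g * f = 1) : Subsingleton M₀ := by
  obtain ⟨n, hn⟩ := hf
  have hpow : ∀ k : ℕ, g ^ k * f ^ k = 1 := by
    intro k
    induction k with
    | zero => simp
    | succ k ih =>
      rw [_root_.pow_succ, _root_.pow_succ', mul_assoc, ← mul_assoc g, hgf, one_mul, ih]
  exact subsingleton_of_zero_eq_one (by rw [← hpow n, hn, mul_zero])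

theorem isUnit_of_mul_eq_one_of_forall_isUnit_or_isNilpotent
    (hM₀ : ∀ a : M₀, IsUnit a ∨ IsNilpotent a) {f g : M₀} (hgf : g * f = 1) : IsUnit f :=
  (hM₀ f).elim id fun hf => have := hf.subsingleton_of_mul_eq_one hgf; isUnit_of_subsingleton f

end UnitOrNilpotent

theorem mem_jacobson_of_forall_isUnit_or_isNilpotent {R : Type*} [Ring R]
    (hR : ∀ a : R, IsUnit a ∨ IsNilpotent a) {f : R} (hf : ¬IsUnit f) : f ∈ Ring.jacobson R := by
  rw [← Ideal.jacobson_bot, Ideal.mem_jacobson_iff]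
  intro y
  have hyf : ¬IsUnit (y * f) := fun ⟨u, hu⟩ =>
    hf <| isUnit_of_mul_eq_one_of_forall_isUnit_or_isNilpotent hR (g := ↑u⁻¹ * y)
      (by rw [mul_assoc, ← hu, Units.inv_mul])
  obtain ⟨u, hu⟩ := ((hR _).resolve_left hyf).isUnit_add_one
  refine ⟨↑u⁻¹, ?_⟩
  rw [Ideal.mem_bot, mul_assoc, ← mul_add_one, ← hu, Units.inv_mul, sub_self]

theorem Module.End.isUnit_or_isNilpotent_of_isCompl {A M : Type*} [Ring A] [AddCommGroup M]
    [Module A M] [IsNoetherian A M] [IsArtinian A M]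
    (hM : ∀ W₁ W₂ : Submodule A M, IsCompl W₁ W₂ → W₁ = ⊥ ∨ W₂ = ⊥) (f : Module.End A M) :
    IsUnit f ∨ IsNilpotent f := by
  obtain ⟨n, hcompl, hn⟩ :=
    (f.eventually_isCompl_ker_pow_range_pow.and (Filter.eventually_ge_atTop 1)).exists
  rcases hM _ _ hcompl with hker | hrange
  · left
    rw [← isUnit_pow_iff (by omega : n ≠ 0), Module.End.isUnit_iff]
    exact IsArtinian.bijective_of_injective_endomorphism _ (LinearMap.ker_eq_bot.mp hker)
  · exact .inr ⟨n, LinearMap.range_eq_bot.mp hrange⟩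

section LocalRing

variable {E M : Type*} [Ring E] [AddCommGroup M] [Module E M]

theorem ker_mkQ_comp_toSpanSingleton_eq_jacobson
    (hE : ∀ f : E, ¬IsUnit f → f ∈ Ring.jacobson E) {x : M}
    (hx : x ∉ Ring.jacobson E • (⊤ : Submodule E M)) :
    LinearMap.ker ((Ring.jacobson E • ⊤ : Submodule E M).mkQ ∘ₗ LinearMap.toSpanSingleton E M x)
      = Ring.jacobson E := by
  ext f
  simp only [LinearMap.mem_ker, LinearMap.coe_comp, Function.comp_apply,
    LinearMap.toSpanSingleton_apply, Submodule.mkQ_apply, Submodule.Quotient.mk_eq_zero]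
  refine ⟨fun hfx => by_contra fun hf => ?_, fun hf => Submodule.smul_mem_smul hf trivial⟩
  obtain ⟨u, rfl⟩ := not_not.mp (mt (hE f) hf)
  exact hx (by simpa using Submodule.smul_mem _ (↑u⁻¹ : E) hfx)

theorem finrank_quotient_jacobson_le_finrank {K : Type*} [Field K] [Module K E]
    [IsScalarTower K E E] [Module K M] [IsScalarTower K E M] [FiniteDimensional K M]
    [Nontrivial M] (hE : ∀ f : E, ¬IsUnit f → f ∈ Ring.jacobson E) :
    Module.finrank K (E ⧸ (Ring.jacobson E).restrictScalars K) ≤ Module.finrank K M := by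
  have : Module.Finite E M := .of_restrictScalars_finite K E M
  obtain ⟨x, -, hx⟩ := SetLike.exists_of_lt (Submodule.jacobson_smul_lt_top (⊤ : Submodule E M))
  set N : Submodule E M := Ring.jacobson E • ⊤
  let φ := N.mkQ ∘ₗ LinearMap.toSpanSingleton E M x
  have hker : LinearMap.ker (φ.restrictScalars K) = (Ring.jacobson E).restrictScalars K := by
    rw [LinearMap.ker_restrictScalars, ker_mkQ_comp_toSpanSingleton_eq_jacobson hE hx]
  calc Module.finrank K (E ⧸ (Ring.jacobson E).restrictScalars K)
      = Module.finrank K (LinearMap.range (φ.restrictScalars K)) := by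
        rw [← hker]; exact (φ.restrictScalars K).quotKerEquivRange.finrank_eq
    _ ≤ Module.finrank K (M ⧸ N) := Submodule.finrank_le _
    _ ≤ Module.finrank K M :=
        LinearMap.finrank_le_finrank_of_surjective (f := N.mkQ.restrictScalars K) N.mkQ_surjective

end LocalRing

/-- for a finite-dimensional indecomposable module `M` over a `K`-algebra `A`,
the dimension of `End_A(M)` modulo its Jacobson radical is at most `dim_K M`. -/
theorem endomorphism_quotient_dim_le (K A M : Type u) [Field K] [Ring A] [Algebra K A]
    [AddCommGroup M] [Module A M] [Module K M] [IsScalarTower K A M] [SMulCommClass A K M]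
    [FiniteDimensional K M] (hM : IsIndecomposableModule A M) :
    Module.finrank K
        (Module.End A M ⧸
          Submodule.restrictScalars K (Ideal.jacobson (⊥ : Ideal (Module.End A M)))) ≤
      Module.finrank K M := by
  obtain ⟨_, hind⟩ := hM
  have : IsNoetherian A M := isNoetherian_of_tower K inferInstance
  have : IsArtinian A M := isArtinian_of_tower K inferInstance
  rw [Ideal.jacobson_bot]
  exact finrank_quotient_jacobson_le_finrank fun _ =>
    mem_jacobson_of_forall_isUnit_or_isNilpotent (Module.End.isUnit_or_isNilpotent_of_isCompl hind)
end

section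
/- Let k ⊆ K ⊆ L be fields, A a k-algebra, and M a finite-dimensional indecomposable A_K-module. If some indecomposable direct summand of M_L := M ⊗_K L is defined over K, then M_L is an indecomposable A_L-module. -/
open scoped TensorProduct

universe u

/-- The transcendence degree of a field extension `K/k`, defined as the supremum of the
cardinalities of algebraically independent subsets of `K` over `k`. -/
noncomputable def fieldTrdeg (k K : Type u) [Field k] [Field K] [Algebra k K] : Cardinal.{u} :=
  ⨆ s : { s : Set K // AlgebraicIndependent k ((↑) : s → K) }, Cardinal.mk s.1

/-- A finite-dimensional module over `A ⊗[k] K`, presented as a finite-dimensional `K`-vector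
space `V` together with a `k`-algebra action of `A` by `K`-linear endomorphisms. -/
structure AlgModOver (k : Type u) [Field k] (A : Type u) [Ring A] [Algebra k A]
    (K : Type u) [Field K] [Algebra k K] : Type (u + 1) where
  V : Type u
  [isAddCommGroup : AddCommGroup V]
  [isModule : Module K V]
  [isFinite : FiniteDimensional K V]
  ρ : A → (V →ₗ[K] V)
  ρ_add : ∀ a b : A, ρ (a + b) = ρ a + ρ b
  ρ_mul : ∀ a b : A, ρ (a * b) = ρ a ∘ₗ ρ b
  ρ_one : ρ 1 = LinearMap.id
  ρ_algebraMap : ∀ c : k, ρ (algebraMap k A c) = algebraMap k K c • LinearMap.id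

attribute [instance] AlgModOver.isAddCommGroup AlgModOver.isModule AlgModOver.isFinite

namespace AlgModOver

variable {k A : Type u} [Field k] [Ring A] [Algebra k A]

/-- Isomorphism of `A ⊗[k] K`-modules. -/
def Iso {K : Type u} [Field K] [Algebra k K] (M N : AlgModOver k A K) : Prop :=
  ∃ e : M.V ≃ₗ[K] N.V, ∀ (a : A) (v : M.V), e (M.ρ a v) = N.ρ a (e v)

/-- An `A`-invariant subspace. -/
def IsInvariant {K : Type u} [Field K] [Algebra k K] (M : AlgModOver k A K)
    (W : Submodule K M.V) : Prop :=
  ∀ a : A, ∀ v ∈ W, M.ρ a v ∈ W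

/-- The submodule structure on an invariant subspace. -/
def subrep {K : Type u} [Field K] [Algebra k K] (M : AlgModOver k A K)
    (W : Submodule K M.V) (hW : M.IsInvariant W) : AlgModOver k A K where
  V := W
  ρ a := (M.ρ a).restrict (hW a)
  ρ_add a b := by ext v; simp [M.ρ_add, LinearMap.restrict_apply]
  ρ_mul a b := by ext v; simp [M.ρ_mul, LinearMap.restrict_apply]
  ρ_one := by ext v; simp [M.ρ_one, LinearMap.restrict_apply]
  ρ_algebraMap c := by ext v; simp [M.ρ_algebraMap, LinearMap.restrict_apply]

/-- A module is indecomposable if it is nonzero and is not the direct sum of two nonzero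
invariant subspaces. -/
def Indecomposable {K : Type u} [Field K] [Algebra k K] (M : AlgModOver k A K) : Prop :=
  Nontrivial M.V ∧ ∀ W₁ W₂ : Submodule K M.V, M.IsInvariant W₁ → M.IsInvariant W₂ →
    IsCompl W₁ W₂ → W₁ = ⊥ ∨ W₂ = ⊥

/-- Base change of an `A ⊗[k] K₀`-module along a field extension `K/K₀`. -/
noncomputable def baseChange {K₀ : Type u} [Field K₀] [Algebra k K₀]
    (K : Type u) [Field K] [Algebra k K] [Algebra K₀ K] [IsScalarTower k K₀ K]
    (N : AlgModOver k A K₀) : AlgModOver k A K where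
  V := K ⊗[K₀] N.V
  ρ a := LinearMap.baseChange K (N.ρ a)
  ρ_add a b := by rw [N.ρ_add, LinearMap.baseChange_add]
  ρ_mul a b := by rw [N.ρ_mul, LinearMap.baseChange_comp]
  ρ_one := by rw [N.ρ_one, LinearMap.baseChange_id]
  ρ_algebraMap c := by
    rw [N.ρ_algebraMap]
    refine LinearMap.ext fun x => ?_
    induction x using TensorProduct.induction_on with
    | zero => simp
    | tmul y v =>
        simp only [LinearMap.baseChange_smul, LinearMap.baseChange_id, LinearMap.smul_apply,
          LinearMap.id_apply, TensorProduct.smul_tmul', TensorProduct.smul_tmul]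
        rw [TensorProduct.tmul_smul, TensorProduct.smul_tmul', algebraMap_smul, algebraMap_smul]
    | add x y hx hy => simp_all

/-- A module over `A ⊗[k] L` is defined over a smaller field `K` with `k ⊆ K ⊆ L`. -/
def IsDefinedOverField {L : Type u} [Field L] [Algebra k L] (M : AlgModOver k A L)
    (K : Type u) [Field K] [Algebra k K] [Algebra K L] [IsScalarTower k K L] : Prop :=
  ∃ N : AlgModOver k A K, Iso (N.baseChange L) M

/-- `M` is defined over the intermediate field `K₀`. -/
def IsDefinedOver {K : Type u} [Field K] [Algebra k K] (M : AlgModOver k A K)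
    (K₀ : IntermediateField k K) : Prop :=
  ∃ N : AlgModOver k A K₀, Iso (N.baseChange K) M

/-- The essential dimension of `M`: the least transcendence degree of a field of
definition of `M`. -/
noncomputable def essDim {K : Type u} [Field K] [Algebra k K] (M : AlgModOver k A K) :
    Cardinal.{u} :=
  ⨅ K₀ : { K₀ : IntermediateField k K // M.IsDefinedOver K₀ }, fieldTrdeg k K₀.1

end AlgModOver

/-- `A ⊗[k] K` has finite representation type: there are only finitely many isomorphism
classes of finite-dimensional indecomposable modules. -/
def FiniteRepType (k A : Type u) [Field k] [Ring A] [Algebra k A]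
    (K : Type u) [Field K] [Algebra k K] : Prop :=
  ∃ (ι : Type u) (_ : Finite ι) (f : ι → AlgModOver k A K),
    ∀ M : AlgModOver k A K, M.Indecomposable → ∃ i, M.Iso (f i)

/-!
Write `M_L = W₁ ⊕ W₂` with `W₁ ≅ N_L`, and let `F : N_L → M_L`, `G : M_L → N_L` be the
inclusion and projection, so `G ∘ F = 1`. Expanding in a `K`-basis `(c_i)` of `L` gives
`F = ∑ c_i • (f_i)_L` and `G = ∑ c_j • (g_j)_L` with `A`-linear `f_i : N → M` and
`g_j : M → N`, hence `1 = ∑ c_j c_i • (g_j f_i)_L`. By Fitting's lemma the `A`-linear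
endomorphisms of the indecomposable `N_L` form a local ring, so one `(g_j f_i)_L`, and then
`g_j f_i`, is invertible. Thus `f_i` splits `N` off the indecomposable `M`, so `f_i : N ≅ M`
and `M_L ≅ N_L`.
-/

namespace TensorProduct

variable {R M N N' ι : Type*} [CommSemiring R] [AddCommMonoid M] [Module R M]
  [AddCommMonoid N] [Module R N] [AddCommMonoid N'] [Module R N'] [DecidableEq ι]

lemma equivFinsuppOfBasisLeft_lTensor_apply (ℬ : Module.Basis ι R M) (g : N →ₗ[R] N')
    (x : M ⊗[R] N) (i : ι) :
    equivFinsuppOfBasisLeft ℬ (g.lTensor M x) i = g (equivFinsuppOfBasisLeft ℬ x i) := by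
  induction x using TensorProduct.induction_on with
  | zero => simp
  | tmul m n => simp
  | add x y hx hy => simp [hx, hy]

end TensorProduct

namespace AlgModOver

variable {k A : Type u} [Field k] [Ring A] [Algebra k A]

section Equivariant

variable {K : Type u} [Field K] [Algebra k K] {P Q R : AlgModOver k A K}

def IsEquivariant (P Q : AlgModOver k A K) (f : P.V →ₗ[K] Q.V) : Prop :=
  ∀ (a : A) (v : P.V), f (P.ρ a v) = Q.ρ a (f v)

lemma IsEquivariant.comp {g : Q.V →ₗ[K] R.V} {f : P.V →ₗ[K] Q.V} (hg : IsEquivariant Q R g)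
    (hf : IsEquivariant P Q f) : IsEquivariant P R (g ∘ₗ f) := fun a v => by
  simp [hf a v, hg a]

lemma IsEquivariant.smul {f : P.V →ₗ[K] Q.V} (hf : IsEquivariant P Q f) (c : K) :
    IsEquivariant P Q (c • f) := fun a v => by
  simp [hf a v]

lemma IsEquivariant.symm {e : P.V ≃ₗ[K] Q.V} (he : IsEquivariant P Q e) :
    IsEquivariant Q P e.symm := fun a w => e.injective <| by
  simpa using (he a (e.symm w)).symm

lemma Iso.symm (h : P.Iso Q) : Q.Iso P :=
  let ⟨e, he⟩ := h
  ⟨e.symm, IsEquivariant.symm (e := e) he⟩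

lemma isEquivariant_iff_mem_centralizer {u : Module.End K P.V} :
    IsEquivariant P P u ↔ u ∈ Subalgebra.centralizer K (Set.range P.ρ) := by
  simp only [Subalgebra.mem_centralizer_iff, Set.forall_mem_range, LinearMap.ext_iff,
    Module.End.mul_apply, IsEquivariant]
  exact forall_congr' fun a => forall_congr' fun v => eq_comm

lemma IsEquivariant.isInvariant_ker {u : Module.End K P.V} (hu : IsEquivariant P P u) :
    P.IsInvariant (LinearMap.ker u) := fun a v hv => by
  rw [LinearMap.mem_ker] at hv ⊢
  rw [hu, hv, map_zero]

lemma IsEquivariant.isInvariant_range {u : Module.End K P.V} (hu : IsEquivariant P P u) :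
    P.IsInvariant (LinearMap.range u) := by
  rintro a _ ⟨v, rfl⟩
  exact ⟨P.ρ a v, hu a v⟩

lemma isEquivariant_subtype {W : Submodule K P.V} (hW : P.IsInvariant W) :
    IsEquivariant (P.subrep W hW) P W.subtype := fun _ _ => rfl

lemma isEquivariant_projectionOnto {W₁ W₂ : Submodule K P.V} (hW₁ : P.IsInvariant W₁)
    (hW₂ : P.IsInvariant W₂) (h : IsCompl W₁ W₂) :
    IsEquivariant P (P.subrep W₁ hW₁) (W₁.projectionOnto W₂ h) := by
  intro a v
  obtain ⟨x, hx, y, hy, rfl⟩ :=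
    Submodule.mem_sup.1 (h.sup_eq_top ▸ Submodule.mem_top (x := v))
  change W₁.projectionOnto W₂ h (P.ρ a (x + y)) =
    (P.ρ a).restrict (hW₁ a) (W₁.projectionOnto W₂ h (x + y))
  simp only [map_add, Submodule.projectionOnto_apply_of_mem_left h hx,
    Submodule.projectionOnto_apply_of_mem_left h (hW₁ a x hx),
    Submodule.projectionOnto_apply_of_mem_right h hy,
    Submodule.projectionOnto_apply_of_mem_right h (hW₂ a y hy), add_zero]
  rfl

theorem Indecomposable.of_iso (hP : P.Indecomposable) (h : Q.Iso P) : Q.Indecomposable := by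
  obtain ⟨e, he⟩ := h
  have := hP.1
  refine ⟨e.toEquiv.nontrivial, fun W₁ W₂ h₁ h₂ hc => ?_⟩
  have hmap : ∀ W, Q.IsInvariant W → P.IsInvariant (W.map (e : Q.V →ₗ[K] P.V)) := by
    rintro W hW a _ ⟨w, hw, rfl⟩
    exact ⟨Q.ρ a w, hW a w hw, he a w⟩
  simpa using
    hP.2 _ _ (hmap W₁ h₁) (hmap W₂ h₂) ((Submodule.orderIsoMapComap e).isCompl hc)

theorem Indecomposable.isUnit_or_isNilpotent (hP : P.Indecomposable) {u : Module.End K P.V}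
    (hu : IsEquivariant P P u) : IsUnit u ∨ IsNilpotent u := by
  obtain ⟨n, hcompl, hn⟩ :=
    (u.eventually_isCompl_ker_pow_range_pow.and (Filter.eventually_ge_atTop 1)).exists
  have hun : IsEquivariant P P (u ^ n) := isEquivariant_iff_mem_centralizer.2 <|
    pow_mem (isEquivariant_iff_mem_centralizer.1 hu) n
  rcases hP.2 _ _ hun.isInvariant_ker hun.isInvariant_range hcompl with h | h
  · exact Or.inl <| (isUnit_pow_iff (by omega)).1 <| (LinearMap.isUnit_iff_ker_eq_bot _).2 h
  · exact Or.inr ⟨n, LinearMap.range_eq_bot.1 h⟩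

theorem Indecomposable.isLocalRing_centralizer (hP : P.Indecomposable) :
    IsLocalRing (Subalgebra.centralizer K (Set.range P.ρ)) := by
  have := hP.1
  refine IsLocalRing.of_isUnit_or_isUnit_one_sub_self fun u => ?_
  rcases hP.isUnit_or_isNilpotent (isEquivariant_iff_mem_centralizer.2 u.2) with h | ⟨n, hn⟩
  · let v : Subalgebra.centralizer K (Set.range P.ρ) :=
      ⟨↑h.unit⁻¹, fun g hg => Commute.units_inv_right <| by
        rw [h.unit_spec]; exact u.2 g hg⟩
    exact Or.inl <|
      isUnit_iff_exists.2 ⟨v, Subtype.ext h.mul_val_inv, Subtype.ext h.val_inv_mul⟩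
  · exact Or.inr <| IsNilpotent.isUnit_one_sub ⟨n, Subtype.ext hn⟩

theorem Indecomposable.exists_isUnit_of_sum_eq_one (hP : P.Indecomposable) {ι : Type*}
    {s : Finset ι} {u : ι → Module.End K P.V} (hu : ∀ i, IsEquivariant P P (u i))
    (hsum : ∑ i ∈ s, u i = 1) : ∃ i ∈ s, IsUnit (u i) := by
  have := hP.isLocalRing_centralizer
  let v : ι → Subalgebra.centralizer K (Set.range P.ρ) :=
    fun i => ⟨u i, isEquivariant_iff_mem_centralizer.1 (hu i)⟩
  have hv : ∑ i ∈ s, v i = 1 := Subtype.ext <| by simpa [v] using hsum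
  obtain ⟨i, hi, hvi⟩ := IsLocalRing.exists_of_isUnit_sum (hv ▸ isUnit_one)
  exact ⟨i, hi, hvi.map (Subalgebra.centralizer K (Set.range P.ρ)).val⟩

theorem Indecomposable.bijective_of_bijective_comp (hP : P.Indecomposable) [Nontrivial Q.V]
    {f : Q.V →ₗ[K] P.V} {g : P.V →ₗ[K] Q.V} (hf : IsEquivariant Q P f)
    (hg : IsEquivariant P Q g) (hgf : Function.Bijective (g ∘ₗ f)) : Function.Bijective f := by
  let e := LinearEquiv.ofBijective _ hgf
  -- `p` is the idempotent projecting `P` onto the copy `f(Q)` of `Q`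
  let p : Module.End K P.V := f ∘ₗ e.symm.toLinearMap ∘ₗ g
  have hp : IsEquivariant P P p := hf.comp ((IsEquivariant.symm (e := e) (hg.comp hf)).comp hg)
  have hpf : ∀ y, p (f y) = f y := fun y => congrArg f (e.symm_apply_apply y)
  have hinj : Function.Injective f := Function.Injective.of_comp hgf.1
  rcases hP.2 _ _ hp.isInvariant_range hp.isInvariant_ker
    (LinearMap.IsIdempotentElem.isCompl (LinearMap.ext fun x => hpf _)) with h | h
  · obtain ⟨y, hy⟩ := exists_ne (0 : Q.V)
    have : f y ∈ LinearMap.range p := ⟨f y, hpf y⟩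
    rw [h, Submodule.mem_bot, ← map_zero f] at this
    exact absurd (hinj this) hy
  · refine ⟨hinj, fun x => ?_⟩
    obtain ⟨z, hz⟩ := LinearMap.injective_iff_surjective.1 (LinearMap.ker_eq_bot.1 h) x
    exact ⟨_, hz⟩

end Equivariant

section BaseChange

variable {K L : Type u} [Field K] [Algebra k K] [Field L] [Algebra k L] [Algebra K L]
  [IsScalarTower k K L] {P Q : AlgModOver k A K}

lemma IsEquivariant.baseChange {f : P.V →ₗ[K] Q.V} (hf : IsEquivariant P Q f) :
    IsEquivariant (P.baseChange L) (Q.baseChange L) (f.baseChange L) := fun a y => by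
  have hcomm : f ∘ₗ P.ρ a = Q.ρ a ∘ₗ f := LinearMap.ext (hf a)
  have hcommL : f.baseChange L ∘ₗ (P.ρ a).baseChange L =
      (Q.ρ a).baseChange L ∘ₗ f.baseChange L := by
    rw [← LinearMap.baseChange_comp, hcomm, LinearMap.baseChange_comp]
  exact LinearMap.congr_fun hcommL y

lemma Iso.baseChange (h : P.Iso Q) : (P.baseChange L).Iso (Q.baseChange L) :=
  let ⟨e, he⟩ := h
  ⟨e.baseChange K L _ _, IsEquivariant.baseChange (f := e.toLinearMap) he⟩

theorem exists_eq_sum_smul_baseChange {γ : Type*} (c : Module.Basis γ K L)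
    {F : L ⊗[K] P.V →ₗ[L] L ⊗[K] Q.V}
    (hF : IsEquivariant (P.baseChange L) (Q.baseChange L) F) :
    ∃ (s : Finset γ) (f : γ → P.V →ₗ[K] Q.V), (∀ i, IsEquivariant P Q (f i)) ∧
      F = ∑ i ∈ s, c i • (f i).baseChange L := by
  classical
  let Φ : P.V →ₗ[K] γ →₀ Q.V :=
    (TensorProduct.equivFinsuppOfBasisLeft c).toLinearMap ∘ₗ F.restrictScalars K ∘ₗ
      TensorProduct.mk K L P.V 1
  let B := Module.finBasis K P.V
  let s := Finset.univ.biUnion fun j => (Φ (B j)).support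
  have hsupp : ∀ v, (Φ v).support ⊆ s := fun v => by
    rw [← B.sum_repr v, map_sum]
    refine Finsupp.support_finsetSum.trans (Finset.biUnion_mono fun j _ => ?_)
    rw [map_smul]
    exact Finsupp.support_smul
  refine ⟨s, fun i => Finsupp.lapply i ∘ₗ Φ, fun i a v => ?_, ?_⟩
  · have hρ : F ((P.ρ a).baseChange L (1 ⊗ₜ v)) = (Q.ρ a).baseChange L (F (1 ⊗ₜ v)) :=
      hF a (1 ⊗ₜ v)
    rw [LinearMap.baseChange_tmul, LinearMap.baseChange_eq_ltensor] at hρ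
    simp [Φ, hρ, TensorProduct.equivFinsuppOfBasisLeft_lTensor_apply]
  · have hF1 : ∀ v, F (1 ⊗ₜ v) = ∑ i ∈ s, c i ⊗ₜ Φ v i := fun v => by
      rw [← (TensorProduct.equivFinsuppOfBasisLeft c).symm_apply_apply (F (1 ⊗ₜ v)),
        TensorProduct.equivFinsuppOfBasisLeft_symm_apply]
      exact Finsupp.sum_of_support_subset (Φ v) (hsupp v) _ fun i _ =>
        TensorProduct.tmul_zero _ _
    refine TensorProduct.AlgebraTensorModule.ext fun t v => ?_
    rw [← mul_one t, ← smul_eq_mul, ← TensorProduct.smul_tmul', map_smul, map_smul, hF1]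
    simp [Finset.smul_sum, TensorProduct.smul_tmul']

theorem exists_bijective_comp_of_baseChange_retraction {N M : AlgModOver k A K}
    (hN : (N.baseChange L).Indecomposable) {F : L ⊗[K] N.V →ₗ[L] L ⊗[K] M.V}
    {G : L ⊗[K] M.V →ₗ[L] L ⊗[K] N.V}
    (hF : IsEquivariant (N.baseChange L) (M.baseChange L) F)
    (hG : IsEquivariant (M.baseChange L) (N.baseChange L) G) (hGF : G ∘ₗ F = LinearMap.id) :
    ∃ (f : N.V →ₗ[K] M.V) (g : M.V →ₗ[K] N.V),
      IsEquivariant N M f ∧ IsEquivariant M N g ∧ Function.Bijective (g ∘ₗ f) := by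
  let c := Module.Basis.ofVectorSpace K L
  obtain ⟨s, f, hf, rfl⟩ := exists_eq_sum_smul_baseChange c hF
  obtain ⟨t, g, hg, rfl⟩ := exists_eq_sum_smul_baseChange c hG
  have hsum : ∑ p ∈ t ×ˢ s, (c p.1 * c p.2) • (g p.1 ∘ₗ f p.2).baseChange L = 1 := by
    rw [Module.End.one_eq_id, ← hGF]
    refine LinearMap.ext fun y => ?_
    simp [Finset.sum_product, LinearMap.sum_apply, map_sum, Finset.smul_sum, smul_smul,
      LinearMap.baseChange_comp]
  have hterm : ∀ p : _ × _, IsEquivariant (N.baseChange L) (N.baseChange L)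
      ((c p.1 * c p.2) • (g p.1 ∘ₗ f p.2).baseChange L) :=
    fun p => ((hg p.1).comp (hf p.2)).baseChange.smul _
  obtain ⟨⟨j, i⟩, -, hunit⟩ := hN.exists_isUnit_of_sum_eq_one hterm hsum
  refine ⟨f i, g j, hf i, hg j, ?_⟩
  have hinjL : Function.Injective ((g j ∘ₗ f i).baseChange L) := fun x y hxy =>
    ((Module.End.isUnit_iff _).1 hunit).1 (by simp only [LinearMap.smul_apply, hxy])
  rw [LinearMap.baseChange_eq_ltensor, Module.FaithfullyFlat.lTensor_injective_iff_injective]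
    at hinjL
  exact ⟨hinjL, LinearMap.injective_iff_surjective.1 hinjL⟩

end BaseChange

end AlgModOver

open AlgModOver

/-- if some indecomposable direct summand of `M ⊗_K L` is defined over `K`,
where `M` is an indecomposable module over `A ⊗[k] K`, then `M ⊗_K L` is indecomposable. -/
theorem baseChange_indecomposable_of_summand_definedOver (k A K L : Type u)
    [Field k] [Ring A] [Algebra k A] [Field K] [Algebra k K]
    [Field L] [Algebra k L] [Algebra K L] [IsScalarTower k K L]
    (M : AlgModOver k A K) (hM : M.Indecomposable)
    (h : ∃ (W₁ W₂ : Submodule L (M.baseChange L).V)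
        (hW₁ : (M.baseChange L).IsInvariant W₁) (_ : (M.baseChange L).IsInvariant W₂),
        IsCompl W₁ W₂ ∧ ((M.baseChange L).subrep W₁ hW₁).Indecomposable ∧
          ((M.baseChange L).subrep W₁ hW₁).IsDefinedOverField K) :
    (M.baseChange L).Indecomposable := by
  obtain ⟨W₁, W₂, hW₁, hW₂, hcompl, hW₁_indec, N, e, he⟩ := h
  have hNL : (N.baseChange L).Indecomposable := hW₁_indec.of_iso ⟨e, he⟩
  obtain ⟨f, g, hf, hg, hgf⟩ := exists_bijective_comp_of_baseChange_retraction hNL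
    ((isEquivariant_subtype hW₁).comp he)
    ((IsEquivariant.symm (e := e) he).comp (isEquivariant_projectionOnto hW₁ hW₂ hcompl))
    (LinearMap.ext fun y =>
      (congrArg e.symm (Submodule.projectionOnto_apply_left hcompl (e y))).trans
        (e.symm_apply_apply y))
  have : Nontrivial N.V :=
    not_subsingleton_iff_nontrivial.1 fun _ =>
      not_subsingleton_iff_nontrivial.2 hNL.1 (inferInstance : Subsingleton (L ⊗[K] N.V))
  have hf_bij := hM.bijective_of_bijective_comp hf hg hgf
  exact hNL.of_iso (Iso.symm ⟨LinearEquiv.ofBijective f hf_bij, hf⟩).baseChange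
end

section
/- Let Q be a finite quiver with Λ_Q > 0 (i.e., Q is wild). Then there exist a nonempty subset S ⊆ Q₀, a vector α ∈ ℝ^S, and λ ∈ ℝ such that: the full subquiver Q_S is connected and wild (Λ_{Q_S} > 0), α_i > 0 for all i ∈ S, Σ_{i ∈ S} α_i = 1, (α, e_i) = −2λ for every i ∈ S (the bilinear form being that of Q_S), λ > 0, and Λ_Q = λ. Moreover, Λ_Q is the maximum of λ over all such triples (S, α, λ). -/
open scoped TensorProduct

universe u

section TitsForm

variable {V : Type} [Fintype V]

/-- The Tits form of a finite quiver with `c i j` arrows from vertex `i` to vertex `j`. -/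
def titsForm (c : V → V → ℕ) (α : V → ℝ) : ℝ :=
  ∑ i, α i ^ 2 - ∑ i, ∑ j, (c i j : ℝ) * α i * α j

/-- The symmetric bilinear form associated with the Tits form. -/
def titsBilin (c : V → V → ℕ) (α β : V → ℝ) : ℝ :=
  titsForm c (α + β) - titsForm c α - titsForm c β

/-- `Λ_Q`: the maximum of `-q_Q` on the standard simplex. -/
noncomputable def LambdaQ (c : V → V → ℕ) : ℝ :=
  sSup ((fun α => - titsForm c α) '' stdSimplex ℝ V)

/-- The underlying graph of the full subquiver of `Q` on the vertex set `S` is connected. -/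
def SubquiverConnected (c : V → V → ℕ) (S : Finset V) : Prop :=
  (SimpleGraph.fromRel fun i j : {x // x ∈ S} => 0 < c i.1 j.1 + c j.1 i.1).Connected

/-- The integral Tits form. -/
def titsFormZ (c : V → V → ℕ) (α : V → ℤ) : ℤ :=
  ∑ i, α i ^ 2 - ∑ i, ∑ j, (c i j : ℤ) * α i * α j

/-- The integral symmetric bilinear form associated with the Tits form. -/
def titsBilinZ (c : V → V → ℕ) (α β : V → ℤ) : ℤ :=
  titsFormZ c (α + β) - titsFormZ c α - titsFormZ c β

variable [DecidableEq V]

/-- The simple reflection at a loop-free vertex `i`. -/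
def simpleReflection (c : V → V → ℕ) (i : V) (β : V → ℤ) : V → ℤ :=
  β - titsBilinZ c β (Pi.single i 1) • Pi.single i 1

/-- `α` is a positive real root: it is obtained from a standard basis vector at a loop-free
vertex by applying finitely many simple reflections at loop-free vertices. -/
def IsPositiveRealRoot (c : V → V → ℕ) (α : V → ℕ) : Prop :=
  ∃ (l : List V) (j : V), (∀ i ∈ l, c i i = 0) ∧ c j j = 0 ∧
    (fun i => (α i : ℤ)) = l.foldr (simpleReflection c) (Pi.single j 1)

end TitsForm

/-! The simplex is compact, so `-q_Q` attains `Λ_Q` at some `a`. Moving a little mass from a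
vertex `i` of the support of `a` to any vertex `j` stays in the simplex, so first-order optimality
gives `(a, eᵢ) ≤ (a, eⱼ)`; hence `(a, eᵢ)` is constant on the support, and Euler's identity
`∑ aₖ (a, eₖ) = 2 q_Q(a)` identifies the constant as `-2Λ_Q`. The support is connected: were it
split into two parts with no arrows between them, of masses `s₁ + s₂ = 1`, then `q_Q` would be
additive over the parts and the homogeneous bound `-q_Q(b) ≤ (∑ b)² Λ_Q` would give
`Λ_Q ≤ (s₁² + s₂²) Λ_Q < Λ_Q`. Conversely, by Euler's identity every triple `(S, α, λ)` has
`λ = -q_{Q_S}(α) ≤ Λ_Q`. -/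

open Finset Filter Topology

section Algebra

variable {V : Type} [Fintype V] (c : V → V → ℕ)

def titsGrad (α : V → ℝ) (m : V) : ℝ :=
  2 * α m - ∑ j, ((c m j : ℝ) + c j m) * α j

theorem titsBilin_eq_titsGrad_dotProduct (α β : V → ℝ) :
    titsBilin c α β = titsGrad c α ⬝ᵥ β := by
  have hswap : ∑ i, ∑ j, (c i j : ℝ) * α i * β j = ∑ m, ∑ j, (c j m : ℝ) * α j * β m :=
    sum_comm
  simp only [titsBilin, titsForm, titsGrad, dotProduct, Pi.add_apply, add_sq, add_mul, mul_add,
    sub_mul, sum_add_distrib, sum_sub_distrib, sum_mul] at hswap ⊢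
  rw [hswap]
  ring_nf
  simp only [mul_right_comm _ (β _) (α _)]
  ring

theorem titsForm_smul (t : ℝ) (α : V → ℝ) : titsForm c (t • α) = t ^ 2 * titsForm c α := by
  simp only [titsForm, Pi.smul_apply, smul_eq_mul, mul_sub, mul_sum]
  ring_nf

theorem titsBilin_self (α : V → ℝ) : titsBilin c α α = 2 * titsForm c α := by
  rw [titsBilin, ← two_smul ℝ α, titsForm_smul]
  ring

theorem titsForm_add_smul (α v : V → ℝ) (t : ℝ) :
    titsForm c (α + t • v) = titsForm c α + t * titsBilin c α v + t ^ 2 * titsForm c v := by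
  have h := titsBilin_eq_titsGrad_dotProduct c α (t • v)
  rw [dotProduct_smul, ← titsBilin_eq_titsGrad_dotProduct, titsBilin, titsForm_smul,
    smul_eq_mul] at h
  linarith

variable [DecidableEq V]

theorem titsBilin_single_one (α : V → ℝ) (k : V) :
    titsBilin c α (Pi.single k 1) = titsGrad c α k := by
  rw [titsBilin_eq_titsGrad_dotProduct, dotProduct_single_one]

theorem sum_mul_titsBilin_single_one (α : V → ℝ) :
    ∑ k, α k * titsBilin c α (Pi.single k 1) = 2 * titsForm c α := by
  calc ∑ k, α k * titsBilin c α (Pi.single k 1) = titsGrad c α ⬝ᵥ α := by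
        simp only [titsBilin_single_one, dotProduct, mul_comm]
    _ = 2 * titsForm c α := by rw [← titsBilin_eq_titsGrad_dotProduct, titsBilin_self]

theorem titsForm_eq_neg_of_titsBilin_single_one_eq {α : V → ℝ} {lam : ℝ} (hα : ∑ i, α i = 1)
    (h : ∀ i, titsBilin c α (Pi.single i 1) = -(2 * lam)) : titsForm c α = -lam := by
  have hEuler := sum_mul_titsBilin_single_one c α
  simp only [h, ← sum_mul, hα, one_mul] at hEuler
  linarith

end Algebra

section Simplex

variable {V : Type} [Fintype V] (c : V → V → ℕ)

theorem continuous_titsForm : Continuous (titsForm c) := by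
  unfold titsForm; fun_prop

theorem titsForm_zero : titsForm c 0 = 0 := by
  simp [titsForm]

theorem neg_titsForm_le_LambdaQ {α : V → ℝ} (hα : α ∈ stdSimplex ℝ V) :
    -titsForm c α ≤ LambdaQ c :=
  le_csSup ((isCompact_stdSimplex ℝ V).image (continuous_titsForm c).neg).bddAbove
    ⟨α, hα, rfl⟩

theorem exists_isMaxOn_neg_titsForm [Nonempty V] :
    ∃ a ∈ stdSimplex ℝ V, IsMaxOn (fun β => -titsForm c β) (stdSimplex ℝ V) a := by
  classical
  exact (isCompact_stdSimplex ℝ V).exists_isMaxOn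
    ⟨_, single_mem_stdSimplex ℝ (Classical.arbitrary V)⟩ (continuous_titsForm c).neg.continuousOn

theorem LambdaQ_eq_of_isMaxOn {a : V → ℝ} (ha : a ∈ stdSimplex ℝ V)
    (hmax : IsMaxOn (fun β => -titsForm c β) (stdSimplex ℝ V) a) :
    LambdaQ c = -titsForm c a := by
  refine le_antisymm (csSup_le (Set.Nonempty.image _ ⟨a, ha⟩) ?_) (neg_titsForm_le_LambdaQ c ha)
  rintro _ ⟨β, hβ, rfl⟩
  exact hmax hβ

theorem nonempty_of_LambdaQ_ne_zero (h : LambdaQ c ≠ 0) : Nonempty V := by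
  by_contra hV
  rw [not_nonempty_iff] at hV
  simp [LambdaQ, stdSimplex_of_isEmpty_index] at h

theorem neg_titsForm_le_sq_sum_mul_LambdaQ {b : V → ℝ} (hb : 0 ≤ b) :
    -titsForm c b ≤ (∑ i, b i) ^ 2 * LambdaQ c := by
  rcases (sum_nonneg fun i _ => hb i : 0 ≤ ∑ i, b i).eq_or_lt with hs | hs
  · have hb0 : b = 0 :=
      funext ((sum_eq_zero_iff_of_nonneg fun i _ => hb i).1 hs.symm · (mem_univ _))
    rw [← hs, hb0, titsForm_zero]
    simp
  · have hmem : (∑ i, b i)⁻¹ • b ∈ stdSimplex ℝ V :=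
      ⟨fun i => mul_nonneg (inv_nonneg.2 hs.le) (hb i), by
        simp only [Pi.smul_apply, smul_eq_mul, ← mul_sum, inv_mul_cancel₀ hs.ne']⟩
    have h := neg_titsForm_le_LambdaQ c hmem
    rwa [titsForm_smul, inv_pow, ← mul_neg, inv_mul_le_iff₀ (pow_pos hs 2)] at h

end Simplex

theorem nonneg_of_forall_mem_Ioo_nonneg_add_mul {a b ε : ℝ} (hε : 0 < ε)
    (h : ∀ t ∈ Set.Ioo 0 ε, 0 ≤ a + b * t) : 0 ≤ a := by
  have hlim : Tendsto (fun t => a + b * t) (𝓝[>] 0) (𝓝 a) := by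
    have hcont : Continuous fun t : ℝ => a + b * t := by fun_prop
    simpa using (hcont.tendsto 0).mono_left nhdsWithin_le_nhds
  exact ge_of_tendsto hlim (eventually_of_mem (Ioo_mem_nhdsGT hε) h)

section Optimality

variable {V : Type} [Fintype V] [DecidableEq V]

theorem add_smul_single_sub_single_mem_stdSimplex {a : V → ℝ} (ha : a ∈ stdSimplex ℝ V)
    {i : V} (j : V) {t : ℝ} (ht : 0 ≤ t) (hti : t ≤ a i) :
    a + t • (Pi.single j 1 - Pi.single i 1) ∈ stdSimplex ℝ V := by
  refine ⟨fun k => ?_, ?_⟩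
  · have hj : 0 ≤ t * (Pi.single j 1 : V → ℝ) k :=
      mul_nonneg ht (by by_cases hk : k = j <;> simp [hk])
    have hi : t * (Pi.single i 1 : V → ℝ) k ≤ a k := by
      rcases eq_or_ne k i with rfl | hk
      · simpa using hti
      · simpa [hk] using ha.1 k
    simp only [Pi.add_apply, Pi.smul_apply, Pi.sub_apply, smul_eq_mul, mul_sub]
    linarith
  · simp [sum_add_distrib, ← mul_sum, ha.2]

variable (c : V → V → ℕ)

theorem titsGrad_le_of_isMaxOn {a : V → ℝ} (ha : a ∈ stdSimplex ℝ V)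
    (hmax : IsMaxOn (fun β => -titsForm c β) (stdSimplex ℝ V) a) {i : V} (hi : 0 < a i)
    (j : V) : titsGrad c a i ≤ titsGrad c a j := by
  have hv : titsBilin c a (Pi.single j 1 - Pi.single i 1) = titsGrad c a j - titsGrad c a i := by
    rw [titsBilin_eq_titsGrad_dotProduct, dotProduct_sub, dotProduct_single_one,
      dotProduct_single_one]
  have hslope : ∀ t ∈ Set.Ioo 0 (a i),
      0 ≤ (titsGrad c a j - titsGrad c a i) + titsForm c (Pi.single j 1 - Pi.single i 1) * t := by
    rintro t ⟨ht, hti⟩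
    have h : -titsForm c (a + t • (Pi.single j 1 - Pi.single i 1)) ≤ -titsForm c a :=
      hmax (add_smul_single_sub_single_mem_stdSimplex ha j ht.le hti.le)
    rw [titsForm_add_smul, hv] at h
    exact le_of_mul_le_mul_left (by nlinarith) ht
  linarith [nonneg_of_forall_mem_Ioo_nonneg_add_mul hi hslope]

theorem titsGrad_eq_of_isMaxOn {a : V → ℝ} (ha : a ∈ stdSimplex ℝ V)
    (hmax : IsMaxOn (fun β => -titsForm c β) (stdSimplex ℝ V) a) {i : V} (hi : 0 < a i) :
    titsGrad c a i = 2 * titsForm c a := by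
  have hterm : ∀ k, a k * titsGrad c a k = a k * titsGrad c a i := by
    intro k
    rcases (ha.1 k).eq_or_lt with hk | hk
    · rw [← hk, zero_mul, zero_mul]
    · rw [le_antisymm (titsGrad_le_of_isMaxOn c ha hmax hk i)
        (titsGrad_le_of_isMaxOn c ha hmax hi k)]
  rw [← sum_mul_titsBilin_single_one]
  simp only [titsBilin_single_one, hterm, ← sum_mul, ha.2, one_mul]

end Optimality

section FullSubquiver

variable {V : Type} [Fintype V] (c : V → V → ℕ) (S : Finset V)

abbrev fullSubquiver : S → S → ℕ := fun i j => c i.1 j.1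

theorem sum_subtype_eq_sum_of_forall_notMem {M : Type*} [AddCommMonoid M] {f : V → M}
    (hf : ∀ v ∉ S, f v = 0) : ∑ i : S, f i = ∑ v, f v := by
  rw [sum_coe_sort]
  exact sum_subset (subset_univ S) fun v _ hv => hf v hv

variable {S}

theorem titsForm_fullSubquiver {f : V → ℝ} (hf : ∀ v ∉ S, f v = 0) :
    titsForm (fullSubquiver c S) (fun i => f i) = titsForm c f := by
  unfold titsForm
  rw [sum_subtype_eq_sum_of_forall_notMem S (f := fun v => f v ^ 2) (by simp_all)]
  congr 1
  rw [← sum_subtype_eq_sum_of_forall_notMem S (f := fun v => ∑ j, (c v j : ℝ) * f v * f j)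
    (by intro v hv; simp [hf v hv])]
  exact sum_congr rfl fun i _ => sum_subtype_eq_sum_of_forall_notMem S
    (f := fun j => (c i j : ℝ) * f i * f j) (by intro v hv; simp [hf v hv])

theorem titsBilin_fullSubquiver {f g : V → ℝ} (hf : ∀ v ∉ S, f v = 0) (hg : ∀ v ∉ S, g v = 0) :
    titsBilin (fullSubquiver c S) (fun i => f i) (fun i => g i) = titsBilin c f g := by
  have hfg : ∀ v ∉ S, (f + g) v = 0 := fun v hv => by simp [hf v hv, hg v hv]
  unfold titsBilin
  rw [← titsForm_fullSubquiver c hf, ← titsForm_fullSubquiver c hg,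
    ← titsForm_fullSubquiver c hfg]
  rfl

theorem titsBilin_fullSubquiver_single_one [DecidableEq V] {f : V → ℝ} (hf : ∀ v ∉ S, f v = 0)
    (i : S) :
    titsBilin (fullSubquiver c S) (fun j => f j) (Pi.single i 1) =
      titsBilin c f (Pi.single i.1 1) := by
  have hsingle : (Pi.single i 1 : S → ℝ) = fun j => (Pi.single i.1 1 : V → ℝ) j.1 := by
    ext j
    simp only [Pi.single_apply, Subtype.ext_iff]
  rw [hsingle, titsBilin_fullSubquiver c hf fun v hv =>
    Pi.single_eq_of_ne (by rintro rfl; exact hv i.2) _]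

theorem neg_titsForm_fullSubquiver_le_LambdaQ {α : S → ℝ} (hα : α ∈ stdSimplex ℝ S) :
    -titsForm (fullSubquiver c S) α ≤ LambdaQ c := by
  set f : V → ℝ := Function.extend Subtype.val α 0
  have hfα : (fun i : S => f i) = α := funext (Subtype.val_injective.extend_apply α 0)
  have hf0 : ∀ v ∉ S, f v = 0 := fun v hv =>
    Function.extend_apply' _ _ _ (by rintro ⟨i, rfl⟩; exact hv i.2)
  have hmem : f ∈ stdSimplex ℝ V := by
    refine ⟨fun v => ?_, ?_⟩
    · by_cases hv : v ∈ S
      · exact congrFun hfα ⟨v, hv⟩ ▸ hα.1 _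
      · rw [hf0 v hv]
    · rw [← sum_subtype_eq_sum_of_forall_notMem S hf0, hfα]
      exact hα.2
  rw [← hfα, titsForm_fullSubquiver c hf0]
  exact neg_titsForm_le_LambdaQ c hmem

end FullSubquiver

section Connectivity

variable {V : Type} [Fintype V] (c : V → V → ℕ)

theorem titsForm_eq_add_indicator_compl (s : Set V) {a : V → ℝ}
    (h : ∀ i ∈ s, ∀ j ∉ s, a i ≠ 0 → a j ≠ 0 → c i j = 0 ∧ c j i = 0) :
    titsForm c a = titsForm c (s.indicator a) + titsForm c (sᶜ.indicator a) := by
  have hgrad : ∀ m ∉ s, a m ≠ 0 → titsGrad c (s.indicator a) m = 0 := by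
    intro m hm ham
    refine sub_eq_zero.2 ?_
    rw [Set.indicator_of_notMem hm, mul_zero, eq_comm]
    refine sum_eq_zero fun j _ => ?_
    by_cases hj : j ∈ s
    · rcases eq_or_ne (a j) 0 with haj | haj
      · simp [Set.indicator_of_mem hj, haj]
      · simp [(h j hj m hm haj ham).1, (h j hj m hm haj ham).2]
    · simp [Set.indicator_of_notMem hj]
  have hcross : titsBilin c (s.indicator a) (sᶜ.indicator a) = 0 := by
    rw [titsBilin_eq_titsGrad_dotProduct]
    refine sum_eq_zero fun m _ => ?_
    by_cases hm : m ∈ s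
    · simp [hm]
    · rcases eq_or_ne (a m) 0 with ham | ham
      · simp [ham]
      · simp [hgrad m hm ham]
  rw [titsBilin, Set.indicator_self_add_compl] at hcross
  linarith

theorem sum_indicator_mul_sum_indicator_compl_eq_zero (hΛ : 0 < LambdaQ c) {a : V → ℝ}
    (ha : a ∈ stdSimplex ℝ V) (hmax : LambdaQ c = -titsForm c a) (s : Set V)
    (hsplit : titsForm c a = titsForm c (s.indicator a) + titsForm c (sᶜ.indicator a)) :
    (∑ i, s.indicator a i) * (∑ i, sᶜ.indicator a i) = 0 := by
  have hnn : ∀ t : Set V, 0 ≤ t.indicator a := fun t => Set.indicator_nonneg fun i _ => ha.1 i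
  have h₁ := neg_titsForm_le_sq_sum_mul_LambdaQ c (hnn s)
  have h₂ := neg_titsForm_le_sq_sum_mul_LambdaQ c (hnn sᶜ)
  set s₁ := ∑ i, s.indicator a i
  set s₂ := ∑ i, sᶜ.indicator a i
  have hsum : s₁ + s₂ = 1 := by
    rw [← sum_add_distrib, ← ha.2]
    exact sum_congr rfl fun i _ => congrFun (s.indicator_self_add_compl a) i
  have hsq : s₁ ^ 2 + s₂ ^ 2 = 1 - 2 * (s₁ * s₂) := by linear_combination (s₁ + s₂ + 1) * hsum
  have hprod : 0 ≤ s₁ * s₂ :=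
    mul_nonneg (sum_nonneg fun i _ => hnn s i) (sum_nonneg fun i _ => hnn sᶜ i)
  nlinarith

theorem subquiverConnected_support (hΛ : 0 < LambdaQ c) {a : V → ℝ} (ha : a ∈ stdSimplex ℝ V)
    (hmax : LambdaQ c = -titsForm c a) : SubquiverConnected c (univ.filter (0 < a ·)) := by
  set S := univ.filter (0 < a ·)
  have hmemS : ∀ {v}, v ∈ S ↔ 0 < a v := by simp [S]
  set G := SimpleGraph.fromRel fun i j : S => 0 < c i.1 j.1 + c j.1 i.1
  obtain ⟨u, hu⟩ : ∃ u, 0 < a u := by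
    by_contra! h
    have : ∑ i, a i ≤ 0 := sum_nonpos fun i _ => h i
    linarith [ha.2]
  have sum_indicator_pos : ∀ (t : Set V) i, i ∈ t → 0 < a i → 0 < ∑ j, t.indicator a j := by
    intro t i hi hai
    refine hai.trans_le ?_
    rw [← Set.indicator_of_mem hi a]
    exact single_le_sum (fun j _ => Set.indicator_nonneg (fun k _ => ha.1 k) j) (mem_univ i)
  suffices hreach : ∀ w : S, G.Reachable ⟨u, hmemS.2 hu⟩ w by
    have : Nonempty S := ⟨⟨u, hmemS.2 hu⟩⟩
    exact ⟨fun v w => (hreach v).symm.trans (hreach w)⟩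
  by_contra! ⟨w, hw⟩
  set s : Set V := {x | ∃ hx : x ∈ S, G.Reachable ⟨u, hmemS.2 hu⟩ ⟨x, hx⟩}
  have hsplit := titsForm_eq_add_indicator_compl c s (a := a) <| by
    rintro i ⟨hiS, hi⟩ j hj - haj
    have hjS : j ∈ S := hmemS.2 ((ha.1 j).lt_of_ne' haj)
    by_contra hc
    have hadj : G.Adj ⟨i, hiS⟩ ⟨j, hjS⟩ := by
      rw [SimpleGraph.fromRel_adj]
      refine ⟨fun hij => hj ?_, Or.inl (show 0 < c i j + c j i by omega)⟩
      obtain rfl : i = j := congrArg Subtype.val hij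
      exact ⟨hiS, hi⟩
    exact hj ⟨hjS, hi.trans hadj.reachable⟩
  exact (mul_pos (sum_indicator_pos s u ⟨hmemS.2 hu, .refl _⟩ hu)
    (sum_indicator_pos sᶜ w.1 (fun ⟨_, hr⟩ => hw hr) (hmemS.1 w.2))).ne'
    (sum_indicator_mul_sum_indicator_compl_eq_zero c hΛ ha hmax s hsplit)

end Connectivity

/-- for a wild quiver `Q`, the quantity `Λ_Q` is realized (and maximized) by an
effective wild connected full subquiver: there are a nonempty vertex subset `S`, a strictly
positive vector `α` on `S` summing to `1`, and `λ > 0` with `(α, eᵢ) = -2λ` for all `i ∈ S`,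
such that `Q_S` is connected and wild and `Λ_Q = λ`; moreover `Λ_Q` is the maximum of `λ`
over all such triples. -/
theorem lambda_eq_max_over_effective_subquivers (V : Type) [Fintype V] [DecidableEq V]
    (c : V → V → ℕ) (hw : 0 < LambdaQ c) :
    (∃ (S : Finset V) (α : {x // x ∈ S} → ℝ) (lam : ℝ),
      S.Nonempty ∧ SubquiverConnected c S ∧
      0 < LambdaQ (fun i j : {x // x ∈ S} => c i.1 j.1) ∧
      (∀ i, 0 < α i) ∧ (∑ i, α i = 1) ∧
      (∀ i, titsBilin (fun i j : {x // x ∈ S} => c i.1 j.1) α (Pi.single i 1) = -(2 * lam)) ∧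
      0 < lam ∧ LambdaQ c = lam) ∧
    ∀ (S : Finset V) (α : {x // x ∈ S} → ℝ) (lam : ℝ),
      S.Nonempty → SubquiverConnected c S →
      0 < LambdaQ (fun i j : {x // x ∈ S} => c i.1 j.1) →
      (∀ i, 0 < α i) → (∑ i, α i = 1) →
      (∀ i, titsBilin (fun i j : {x // x ∈ S} => c i.1 j.1) α (Pi.single i 1) = -(2 * lam)) →
      0 < lam → lam ≤ LambdaQ c := by
  refine ⟨?_, fun S α lam _ _ _ hα hsum hbil _ => ?_⟩
  · have := nonempty_of_LambdaQ_ne_zero c hw.ne'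
    obtain ⟨a, ha, hmax⟩ := exists_isMaxOn_neg_titsForm c
    have hΛ := LambdaQ_eq_of_isMaxOn c ha hmax
    set S := univ.filter (0 < a ·)
    have hpos : ∀ i : S, 0 < a i := fun i => (mem_filter.1 i.2).2
    have hS0 : ∀ v ∉ S, a v = 0 := fun v hv => le_antisymm (by simpa [S] using hv) (ha.1 v)
    have haS : (fun i : S => a i) ∈ stdSimplex ℝ S :=
      ⟨fun i => (hpos i).le, (sum_subtype_eq_sum_of_forall_notMem S hS0).trans ha.2⟩
    have hconn := subquiverConnected_support c hw ha hΛ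
    refine ⟨S, fun i => a i, LambdaQ c, ?_, hconn, ?_, hpos, haS.2, fun i => ?_, hw, rfl⟩
    · obtain ⟨i⟩ := hconn.nonempty
      exact ⟨i.1, i.2⟩
    · have h := neg_titsForm_le_LambdaQ (fullSubquiver c S) haS
      rw [titsForm_fullSubquiver c hS0, ← hΛ] at h
      exact hw.trans_le h
    · rw [titsBilin_fullSubquiver_single_one c hS0, titsBilin_single_one,
        titsGrad_eq_of_isMaxOn c ha hmax (hpos i), hΛ]
      ring
  · have hq := titsForm_eq_neg_of_titsBilin_single_one_eq _ hsum hbil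
    simpa [hq] using neg_titsForm_fullSubquiver_le_LambdaQ c ⟨fun i => (hα i).le, hsum⟩
end

section
/- Let Q be a quiver of type Ẽ̃E₈: vertex set {1,…,10}, with exactly one (arbitrarily oriented) arrow joining each of the pairs {1,2}, {2,3}, {3,4}, {3,5}, {5,6}, {6,7}, {7,8}, {8,9}, {9,10}, and no other arrows. Then Λ_Q = 1/2480, and the maximum of −q_Q on S_Q is attained at the point α = (1/1240)(76, 153, 231, 115, 195, 160, 126, 93, 61, 30). -/
open scoped TensorProduct

universe u

/-- The edges of the graph `Ẽ̃E₈` on vertices `0, …, 9` (labelled `1, …, 10` in the paper):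
a chain `1–2–3–5–6–7–8–9–10` with an extra vertex `4` attached to `3`. -/
def ttE8pairs : List (Fin 10 × Fin 10) :=
  [(0, 1), (1, 2), (2, 3), (2, 4), (4, 5), (5, 6), (6, 7), (7, 8), (8, 9)]

/-- The number of edges between two vertices in the graph `Ẽ̃E₈`. -/
def ttE8adj (i j : Fin 10) : ℕ :=
  if (i, j) ∈ ttE8pairs ∨ (j, i) ∈ ttE8pairs then 1 else 0

/-!
`Λ_Q = λ` as soon as `q_Q + λ (∑ᵢ xᵢ)²` is positive semidefinite and `-q_Q` takes the value `λ`
at some point of the simplex. For `Ẽ̃E₈` and `λ = 1/2480` positive semidefiniteness is witnessed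
by an explicit sum of nine squares, and the given `α`, which solves the Lagrange equations
`(∂/∂αᵢ) q_Q(α) = -2λ` for all `i`, realises the value `1/2480`.
-/

open Finset

section TitsForm

variable {V : Type} [Fintype V]

theorem titsForm_eq_of_add_swap_eq {c c' : V → V → ℕ}
    (h : ∀ i j, c i j + c j i = c' i j + c' j i) : titsForm c = titsForm c' := by
  have double (d : V → V → ℕ) (α : V → ℝ) :
      2 * ∑ i, ∑ j, (d i j : ℝ) * α i * α j =
        ∑ i, ∑ j, ((d i j + d j i : ℕ) : ℝ) * α i * α j := by
    rw [two_mul]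
    conv_lhs => enter [2]; rw [Finset.sum_comm]
    simp only [← Finset.sum_add_distrib]
    refine Finset.sum_congr rfl fun i _ => Finset.sum_congr rfl fun j _ => ?_
    push_cast
    ring
  funext α
  have hc := double c α
  simp only [h] at hc
  unfold titsForm
  linarith [double c' α]

theorem titsForm_of_edgeList [DecidableEq V] {l : List (V × V)} (hl : l.Nodup) (α : V → ℝ) :
    titsForm (fun i j => if (i, j) ∈ l then 1 else 0) α =
      ∑ i, α i ^ 2 - (l.map fun e => α e.1 * α e.2).sum := by
  rw [titsForm, ← List.sum_toFinset _ hl, ← Finset.sum_product',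
    show l.toFinset = {e ∈ (univ ×ˢ univ : Finset (V × V)) | e ∈ l} by ext; simp,
    Finset.sum_filter]
  congr 1
  refine Finset.sum_congr rfl fun e _ => ?_
  split_ifs <;> simp

theorem LambdaQ_eq_of_certificate {c : V → V → ℕ} {α : V → ℝ} {lam : ℝ}
    (hα : α ∈ stdSimplex ℝ V) (hval : -titsForm c α = lam)
    (hpsd : ∀ x, 0 ≤ titsForm c x + lam * (∑ i, x i) ^ 2) : LambdaQ c = lam := by
  refine IsGreatest.csSup_eq ⟨⟨α, hα, hval⟩, ?_⟩
  rintro _ ⟨x, hx, rfl⟩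
  have := hpsd x
  rw [hx.2] at this
  linarith

end TitsForm

noncomputable def ttE8Maximiser : Fin 10 → ℝ :=
  fun i => (![76, 153, 231, 115, 195, 160, 126, 93, 61, 30] i : ℝ) / 1240

theorem ttE8Maximiser_mem_stdSimplex : ttE8Maximiser ∈ stdSimplex ℝ (Fin 10) := by
  refine ⟨fun i => ?_, ?_⟩
  · fin_cases i <;> norm_num [ttE8Maximiser]
  · norm_num [ttE8Maximiser, Fin.sum_univ_succ]

section ttE8

variable {c : Fin 10 → Fin 10 → ℕ}

theorem titsForm_ttE8 (hc : ∀ i j, c i j + c j i = ttE8adj i j) (x : Fin 10 → ℝ) :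
    titsForm c x = ∑ i, x i ^ 2 - (x 0 * x 1 + x 1 * x 2 + x 2 * x 3 + x 2 * x 4 + x 4 * x 5 +
      x 5 * x 6 + x 6 * x 7 + x 7 * x 8 + x 8 * x 9) := by
  have horient : ∀ i j, c i j + c j i = (if (i, j) ∈ ttE8pairs then 1 else 0) +
      (if (j, i) ∈ ttE8pairs then 1 else 0) := by
    intro i j
    rw [hc]
    revert i j
    decide
  rw [titsForm_eq_of_add_swap_eq horient, titsForm_of_edgeList (by decide)]
  simp only [ttE8pairs, List.map_cons, List.map_nil, List.sum_cons, List.sum_nil]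
  ring

/- The nine squares are the `LDLᵀ` factorisation of the Gram matrix, eliminating `x 0, …, x 8` in
turn; no tenth square appears because the Gram matrix is singular, with kernel spanned by the
maximiser `α`. -/
theorem titsForm_ttE8_add_sq_sum_nonneg (hc : ∀ i j, c i j + c j i = ttE8adj i j)
    (x : Fin 10 → ℝ) : 0 ≤ titsForm c x + 1 / 2480 * (∑ i, x i) ^ 2 := by
  calc 0 ≤ 2481 / 2480 * (x 0 - 413 / 827 * x 1 +
          (x 2 + x 3 + x 4 + x 5 + x 6 + x 7 + x 8 + x 9) / 2481) ^ 2 +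
        621 / 827 * (x 1 - 413 / 621 * x 2 + (x 3 + x 4 + x 5 + x 6 + x 7 + x 8 + x 9) / 1242) ^ 2 +
        415 / 621 * (x 2 - 62 / 83 * (x 3 + x 4) + (x 5 + x 6 + x 7 + x 8 + x 9) / 830) ^ 2 +
        625 / 996 * (x 3 - 371 / 625 * x 4 + (x 5 + x 6 + x 7 + x 8 + x 9) / 625) ^ 2 +
        254 / 625 * (x 4 - 623 / 508 * x 5 + (x 6 + x 7 + x 8 + x 9) / 254) ^ 2 +
        1977 / 5080 * (x 5 - 2528 / 1977 * x 6 + 4 / 659 * (x 7 + x 8 + x 9)) ^ 2 +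
        2879 / 7908 * (x 6 - 3927 / 2879 * x 7 + 27 / 2879 * (x 8 + x 9)) ^ 2 +
        930 / 2879 * (x 7 - 95 / 62 * x 8 + 29 / 1860 * x 9) ^ 2 +
        15 / 62 * (x 8 - 61 / 30 * x 9) ^ 2 := by positivity
    _ = titsForm c x + 1 / 2480 * (∑ i, x i) ^ 2 := by
      rw [titsForm_ttE8 hc]
      simp only [Fin.sum_univ_succ, Fin.sum_univ_zero, Fin.reduceSucc]
      ring

theorem neg_titsForm_ttE8Maximiser (hc : ∀ i j, c i j + c j i = ttE8adj i j) :
    -titsForm c ttE8Maximiser = 1 / 2480 := by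
  rw [titsForm_ttE8 hc]
  simp only [ttE8Maximiser, Fin.sum_univ_succ, Fin.sum_univ_zero, Fin.reduceSucc, Matrix.cons_val]
  norm_num

end ttE8

/-- for any quiver whose underlying graph is `Ẽ̃E₈` (arrows oriented
arbitrarily), `Λ_Q = 1/2480`, and the maximum of `-q_Q` on the standard simplex is attained
at `α = (76, 153, 231, 115, 195, 160, 126, 93, 61, 30)/1240`. -/
theorem lambda_ttE8 (c : Fin 10 → Fin 10 → ℕ)
    (hc : ∀ i j, c i j + c j i = ttE8adj i j) :
    LambdaQ c = 1 / 2480 ∧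
      (fun i => (![76, 153, 231, 115, 195, 160, 126, 93, 61, 30] i : ℝ) / 1240) ∈
        stdSimplex ℝ (Fin 10) ∧
      - titsForm c (fun i => (![76, 153, 231, 115, 195, 160, 126, 93, 61, 30] i : ℝ) / 1240) =
        LambdaQ c := by
  have hΛ : LambdaQ c = 1 / 2480 :=
    LambdaQ_eq_of_certificate ttE8Maximiser_mem_stdSimplex (neg_titsForm_ttE8Maximiser hc)
      (titsForm_ttE8_add_sq_sum_nonneg hc)
  exact ⟨hΛ, ttE8Maximiser_mem_stdSimplex, hΛ ▸ neg_titsForm_ttE8Maximiser hc⟩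
end
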